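/- arXiv:math-ph/0412082 — 4 statements merged into one kernel-verified Lean document; each statement's English description precedes it below -/
import Mathlib

section
/- Let X be a complete ultrametric space such that: (1) the set of balls of nonzero diameter in X is countable; (2) for every sequence of balls D_k with D_{k+1} ⊊ D_k for all k, the diameters of D_k tend to zero; (3) every ball of nonzero diameter is the union of finitely many of its maximal proper subballs. Then X is a locally compact topological space (in the topology generated by the metric); in fact every ball in X is compact. -/
/-- A ball in a metric space: a closed ball of nonnegative radius. -/
def IsBall {X : Type*} [MetricSpace X] (B : Set X) : Prop :=
  ∃ (z : X) (r : ℝ), 0 ≤ r ∧ B = Metric.closedBall z r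

/-- `B'` is a maximal proper subball of `B`: a ball strictly contained in `B` with
no ball strictly in between. -/
def IsMaxSubball {X : Type*} [MetricSpace X] (B' B : Set X) : Prop :=
  IsBall B' ∧ B' ⊂ B ∧ ∀ B'' : Set X, IsBall B'' → ¬ (B' ⊂ B'' ∧ B'' ⊂ B)

/-- A ball of diameter at most `ε` is covered by a single closed `ε`-ball. -/
lemma small_ball_cover {X : Type*} [MetricSpace X] {C : Set X} (hC : IsBall C)
    {ε : ℝ} (hd : Metric.diam C ≤ ε) : ∃ z : X, C ⊆ Metric.closedBall z ε := by
  obtain ⟨z, rad, hr, rfl⟩ := hC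
  refine ⟨z, fun y hy => ?_⟩
  have hzmem : z ∈ Metric.closedBall z rad := Metric.mem_closedBall_self hr
  have : dist y z ≤ Metric.diam (Metric.closedBall z rad) :=
    Metric.dist_le_diam_of_mem Metric.isBounded_closedBall hy hzmem
  exact Metric.mem_closedBall.2 (this.trans hd)

/-- A complete ultrametric space in which the set of balls of nonzero diameter is
countable, the diameters of any strictly decreasing sequence of balls tend to zero,
and every ball of nonzero diameter is a finite union of its maximal proper subballs,
is locally compact; in fact every ball is compact. -/
theorem stmt_0 {X : Type*} [MetricSpace X] [CompleteSpace X]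
    (hultra : ∀ x y z : X, dist x y ≤ max (dist x z) (dist z y))
    (h1 : {B : Set X | IsBall B ∧ 0 < Metric.diam B}.Countable)
    (h2 : ∀ D : ℕ → Set X, (∀ k, IsBall (D k)) → (∀ k, D (k + 1) ⊂ D k) →
      Filter.Tendsto (fun k => Metric.diam (D k)) Filter.atTop (nhds 0))
    (h3 : ∀ B : Set X, IsBall B → 0 < Metric.diam B →
      ∃ F : Finset (Set X), (∀ C ∈ F, IsMaxSubball C B) ∧ B = ⋃ C ∈ F, C) :
    LocallyCompactSpace X ∧ ∀ B : Set X, IsBall B → IsCompact B := by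
  classical
  -- Main covering lemma: every ball is covered by finitely many closed ε-balls.
  have main : ∀ ε : ℝ, 0 < ε → ∀ B : Set X, IsBall B →
      ∃ s : Finset X, B ⊆ ⋃ x ∈ s, Metric.closedBall x ε := by
    intro ε hε
    -- well-founded relation
    set r : Set X → Set X → Prop :=
      fun B' B => IsBall B' ∧ IsBall B ∧ B' ⊂ B ∧ ε ≤ Metric.diam B' with hr
    haveI : IsIrrefl (Set X) r := ⟨fun a ha => ha.2.2.1.ne rfl⟩
    haveI : IsTrans (Set X) r := ⟨fun a b c hab hbc =>
      ⟨hab.1, hbc.2.1, hab.2.2.1.trans hbc.2.2.1, hab.2.2.2⟩⟩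
    haveI : IsStrictOrder (Set X) r := {}
    have hwf : WellFounded r := by
      rw [RelEmbedding.wellFounded_iff_isEmpty]
      constructor
      intro f
      set D : ℕ → Set X := fun k => f k with hD
      have hrel : ∀ k, r (D (k + 1)) (D k) := fun k =>
        f.map_rel_iff.2 (Nat.lt_succ_self k)
      have hball : ∀ k, IsBall (D k) := by
        intro k
        cases k with
        | zero => exact (hrel 0).2.1
        | succ n => exact (hrel n).1
      have hss : ∀ k, D (k + 1) ⊂ D k := fun k => (hrel k).2.2.1
      have htend := h2 D hball hss
      have hev : ∀ᶠ k in Filter.atTop, Metric.diam (D k) < ε :=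
        htend.eventually (gt_mem_nhds hε)
      obtain ⟨N, hN⟩ := hev.exists_forall_of_atTop
      have : ε ≤ Metric.diam (D (N + 1)) := (hrel N).2.2.2
      exact absurd (hN (N + 1) (Nat.le_succ N)) (not_lt.2 this)
    -- induction
    intro B hB
    induction B using hwf.induction with
    | _ B IH =>
      by_cases hd : Metric.diam B ≤ ε
      · obtain ⟨z, hz⟩ := small_ball_cover hB hd
        exact ⟨{z}, by simpa using hz⟩
      · push_neg at hd
        have hdpos : 0 < Metric.diam B := hε.trans hd
        obtain ⟨F, hF, hcover⟩ := h3 B hB hdpos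
        have key : ∀ C : Set X, C ∈ F →
            ∃ s : Finset X, C ⊆ ⋃ x ∈ s, Metric.closedBall x ε := by
          intro C hC
          have hCball : IsBall C := (hF C hC).1
          by_cases hCd : Metric.diam C ≤ ε
          · obtain ⟨z, hz⟩ := small_ball_cover hCball hCd
            exact ⟨{z}, by simpa using hz⟩
          · push_neg at hCd
            exact IH C ⟨hCball, hB, (hF C hC).2.1, hCd.le⟩ hCball
        choose! g hg using key
        refine ⟨F.sup g, ?_⟩
        intro y hy
        rw [hcover] at hy
        simp only [Set.mem_iUnion] at hy
        obtain ⟨C, hCF, hyC⟩ := hy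
        have := hg C hCF hyC
        simp only [Set.mem_iUnion] at this ⊢
        obtain ⟨x, hx, hyx⟩ := this
        exact ⟨x, Finset.mem_sup.2 ⟨C, hCF, hx⟩, hyx⟩
  -- every ball is totally bounded, hence compact
  have hcomp : ∀ B : Set X, IsBall B → IsCompact B := by
    intro B hB
    have htb : TotallyBounded B := by
      rw [Metric.totallyBounded_iff]
      intro ε hε
      obtain ⟨s, hs⟩ := main (ε / 2) (by linarith) B hB
      refine ⟨↑s, s.finite_toSet, hs.trans ?_⟩
      refine Set.iUnion₂_mono fun x hx => ?_
      exact Metric.closedBall_subset_ball (by linarith)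
    obtain ⟨z, rad, hr, rfl⟩ := hB
    exact TotallyBounded.isCompact_of_isClosed htb Metric.isClosed_closedBall
  have hcb : ∀ (x : X) (rad : ℝ), IsCompact (Metric.closedBall x rad) := by
    intro x rad
    rcases le_or_gt 0 rad with h | h
    · exact hcomp _ ⟨x, rad, h, rfl⟩
    · rw [Metric.closedBall_eq_empty.2 h]
      exact isCompact_empty
  haveI : ProperSpace X := ⟨hcb⟩
  exact ⟨inferInstance, hcomp⟩
end

section
/- Let X be a complete ultrametric space containing at least two points and satisfying: (1) the set of balls of nonzero diameter in X is countable; (2) for every sequence of balls D_k with D_{k+1} ⊊ D_k for all k, the diameters of D_k tend to zero; (3) every ball of nonzero diameter is the union of finitely many of its maximal proper subballs. Consider the simple graph T(X) whose vertices are the balls of nonzero diameter in X together with the balls of zero diameter (singletons) that are maximal proper subballs of a ball of nonzero diameter, and in which two vertices B and C are adjacent if and only if B is a maximal proper subball of C or C is a maximal proper subball of B. Then T(X) is a tree (a connected graph without cycles); moreover every vertex of nonzero diameter has at least two maximal proper subballs. -/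
/-- Vertices of the tree of balls: balls of nonzero diameter, together with
balls of zero diameter that are maximal proper subballs of a ball of nonzero
diameter. -/
def BallVertex (X : Type*) [MetricSpace X] : Type _ :=
  {B : Set X // (IsBall B ∧ 0 < Metric.diam B) ∨
    (IsBall B ∧ Metric.diam B = 0 ∧
      ∃ C : Set X, IsBall C ∧ 0 < Metric.diam C ∧ IsMaxSubball B C)}

/-- The graph `T(X)` of balls in `X`: two vertices are adjacent iff one is a maximal
proper subball of the other. -/
def ballGraph (X : Type*) [MetricSpace X] : SimpleGraph (BallVertex X) where
  Adj B C := IsMaxSubball B.1 C.1 ∨ IsMaxSubball C.1 B.1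
  symm := ⟨fun B C h => h.symm⟩
  loopless := by
    constructor
    intro B h
    rcases h with h | h <;> exact ssubset_irrefl _ h.2.1

/-!
Balls of an ultrametric space are nested or disjoint, and a proper subball has strictly smaller
diameter. Hence a ball has at most one ball of which it is a maximal proper subball, i.e. every
vertex of `T(X)` has at most one neighbour of larger diameter; on a cycle, the vertex of least
diameter would have two, so `T(X)` is acyclic. For connectedness it suffices to join a vertex `u`
to every ball `A ⊋ u`: the maximal proper subball of `A` through a point of `u` either is `u` or
lies strictly between `u` and `A`, and the induction is well founded because strictly decreasing
chains of balls above `u` would have diameters tending to zero while bounded below.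
-/

open Metric Filter Topology

theorem SimpleGraph.isAcyclic_of_unique_larger_neighbor {V α : Type*} [LinearOrder α]
    {G : SimpleGraph V} (f : V → α) (hne : ∀ ⦃u v⦄, G.Adj u v → f u ≠ f v)
    (huniq : ∀ ⦃u v w⦄, G.Adj u v → G.Adj u w → f u < f v → f u < f w → v = w) :
    G.IsAcyclic := by
  classical
  intro v c hc
  obtain ⟨m, hm, hmin⟩ := c.support.toFinset.exists_min_image f ⟨v, by simp⟩
  rw [List.mem_toFinset] at hm
  set c' := c.rotate m hm
  have hc' : c'.IsCycle := hc.rotate hm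
  have hlarger : ∀ y, G.Adj m y → y ∈ c'.support → f m < f y := fun y hadj hy =>
    lt_of_le_of_ne (hmin y (by simpa using (c.mem_support_rotate_iff m hm).mp hy)) (hne hadj)
  have hsnd := c'.adj_snd hc'.not_nil
  have hpen := (c'.adj_penultimate hc'.not_nil).symm
  exact hc'.snd_ne_penultimate <| huniq hsnd hpen
    (hlarger _ hsnd (c'.getVert_mem_support _)) (hlarger _ hpen (c'.getVert_mem_support _))

lemma IsUltrametricDist.diam_closedBall_le {X : Type*} [PseudoMetricSpace X] [IsUltrametricDist X]
    (z : X) {r : ℝ} (hr : 0 ≤ r) : diam (closedBall z r) ≤ r :=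
  diam_le_of_forall_dist_le hr fun x hx y hy =>
    (dist_triangle_max x z y).trans (max_le hx (dist_comm y z ▸ hy))

section

variable {X : Type*} [MetricSpace X]

namespace IsBall

lemma nonempty {B : Set X} (hB : IsBall B) : B.Nonempty := by
  obtain ⟨z, r, hr, rfl⟩ := hB
  exact nonempty_closedBall.mpr hr

lemma isBounded {B : Set X} (hB : IsBall B) : Bornology.IsBounded B := by
  obtain ⟨z, r, -, rfl⟩ := hB
  exact isBounded_closedBall

lemma exists_superset {s : Set X} (hs : Bornology.IsBounded s) (hne : s.Nonempty) :
    ∃ D, IsBall D ∧ s ⊆ D := by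
  obtain ⟨z, hz⟩ := hne
  obtain ⟨r, hr⟩ := (isBounded_iff_subset_closedBall z).mp hs
  exact ⟨_, ⟨z, r, nonempty_closedBall.mp ⟨z, hr hz⟩, rfl⟩, hr⟩

variable [IsUltrametricDist X]

lemma subset_or_subset {B C : Set X} (hB : IsBall B) (hC : IsBall C) (h : (B ∩ C).Nonempty) :
    B ⊆ C ∨ C ⊆ B := by
  obtain ⟨z, r, -, rfl⟩ := hB
  obtain ⟨w, s, -, rfl⟩ := hC
  refine (IsUltrametricDist.closedBall_subset_trichotomy z w r s).imp_right
    (Or.resolve_right · fun hdisj => ?_)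
  exact h.ne_empty (Set.disjoint_iff_inter_eq_empty.mp hdisj)

lemma diam_lt_diam_of_ssubset {B C : Set X} (hB : IsBall B) (hC : IsBall C) (h : B ⊂ C) :
    diam B < diam C := by
  obtain ⟨z, r, hr, rfl⟩ := hB
  obtain ⟨x, hxC, hxB⟩ := Set.exists_of_ssubset h
  calc diam (closedBall z r) ≤ r := IsUltrametricDist.diam_closedBall_le z hr
    _ < dist x z := not_le.mp hxB
    _ ≤ diam C := dist_le_diam_of_mem hC.isBounded hxC (h.1 (mem_closedBall_self hr))

lemma diam_pos_of_ssubset {B C : Set X} (hB : IsBall B) (hC : IsBall C) (h : B ⊂ C) :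
    0 < diam C :=
  diam_nonneg.trans_lt (hB.diam_lt_diam_of_ssubset hC h)

end IsBall

namespace IsMaxSubball

variable [IsUltrametricDist X] {A B C : Set X}

lemma subset_of_ssubset (h : IsMaxSubball B C) (hC : IsBall C) {E : Set X} (hE : IsBall E)
    (hBE : B ⊂ E) : C ⊆ E := by
  rcases hC.subset_or_subset hE (h.1.nonempty.mono (Set.subset_inter h.2.1.1 hBE.1)) with
    hCE | hEC
  · exact hCE
  · by_contra hCE
    exact h.2.2 E hE ⟨hBE, hEC, hCE⟩

lemma unique {C' : Set X} (h : IsMaxSubball B C) (h' : IsMaxSubball B C') (hC : IsBall C)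
    (hC' : IsBall C') : C = C' :=
  (h.subset_of_ssubset hC hC' h'.2.1).antisymm (h'.subset_of_ssubset hC' hC h.2.1)

lemma subset_of_inter_nonempty (h : IsMaxSubball C A) (hA : IsBall A) (hB : IsBall B)
    (hBA : B ⊂ A) (hBC : (B ∩ C).Nonempty) : B ⊆ C := by
  rcases hB.subset_or_subset h.1 hBC with hBC | hCB
  · exact hBC
  · by_contra hBC
    exact hBA.2 (h.subset_of_ssubset hA hB ⟨hCB, hBC⟩)

end IsMaxSubball

variable (X) in
def StrictChainsShrink : Prop :=
  ∀ D : ℕ → Set X, (∀ k, IsBall (D k)) → (∀ k, D (k + 1) ⊂ D k) →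
    Tendsto (fun k => diam (D k)) atTop (𝓝 0)

variable (X) in
def MaxSubballsCover : Prop :=
  ∀ B : Set X, IsBall B → 0 < diam B → ∀ z ∈ B, ∃ C, IsMaxSubball C B ∧ z ∈ C

lemma exists_ne_isMaxSubball (hcover : MaxSubballsCover X) {B : Set X} (hB : IsBall B)
    (hpos : 0 < diam B) : ∃ C₁ C₂ : Set X, C₁ ≠ C₂ ∧ IsMaxSubball C₁ B ∧ IsMaxSubball C₂ B := by
  obtain ⟨z, hz⟩ := hB.nonempty
  obtain ⟨C₁, hC₁, -⟩ := hcover B hB hpos z hz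
  obtain ⟨x, hxB, hxC₁⟩ := Set.exists_of_ssubset hC₁.2.1
  obtain ⟨C₂, hC₂, hxC₂⟩ := hcover B hB hpos x hxB
  exact ⟨C₁, C₂, fun h => hxC₁ (h ▸ hxC₂), hC₁, hC₂⟩

lemma wellFounded_ssubset_of_diam_ge (hshrink : StrictChainsShrink X) {B : Set X} {δ : ℝ}
    (hδ : 0 < δ) (hB : ∀ E, IsBall E → B ⊂ E → δ ≤ diam E) :
    WellFounded fun E F : Set X => (IsBall E ∧ B ⊂ E) ∧ E ⊂ F := by
  refine wellFounded_iff_isEmpty_descending_chain.mpr ⟨fun ⟨D, hD⟩ => ?_⟩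
  have hlim := hshrink (fun k => D (k + 1)) (fun k => (hD k).1.1) (fun k => (hD (k + 1)).2)
  obtain ⟨k, hk⟩ := (hlim.eventually (gt_mem_nhds hδ)).exists
  exact (hB _ (hD k).1.1 (hD k).1.2).not_gt hk

namespace BallVertex

lemma isBall (u : BallVertex X) : IsBall u.1 :=
  u.2.elim (·.1) (·.1)

variable [IsUltrametricDist X]

lemma exists_le_diam_of_ssubset (u : BallVertex X) :
    ∃ δ > 0, ∀ E, IsBall E → u.1 ⊂ E → δ ≤ diam E := by
  rcases u.2 with ⟨-, hpos⟩ | ⟨-, -, C, hC, hCpos, hmax⟩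
  · exact ⟨_, hpos, fun E hE huE => diam_mono huE.1 hE.isBounded⟩
  · exact ⟨_, hCpos, fun E hE huE => diam_mono (hmax.subset_of_ssubset hC hE huE) hE.isBounded⟩

lemma reachable_of_ssubset (hshrink : StrictChainsShrink X) (hcover : MaxSubballsCover X)
    {u v : BallVertex X} (huv : u.1 ⊂ v.1) : (ballGraph X).Reachable u v := by
  obtain ⟨δ, hδ, hle⟩ := u.exists_le_diam_of_ssubset
  induction v using
    (InvImage.wf Subtype.val (wellFounded_ssubset_of_diam_ge hshrink hδ hle)).induction with
  | _ v ih =>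
  obtain ⟨z, hz⟩ := u.isBall.nonempty
  obtain ⟨C, hC, hzC⟩ :=
    hcover v.1 (isBall v) (u.isBall.diam_pos_of_ssubset (isBall v) huv) z (huv.1 hz)
  have huC : u.1 ⊆ C := hC.subset_of_inter_nonempty (isBall v) u.isBall huv ⟨z, hz, hzC⟩
  obtain rfl | huC := huC.eq_or_ssubset
  · exact SimpleGraph.Adj.reachable (G := ballGraph X) (.inl hC)
  · let w : BallVertex X := ⟨C, .inl ⟨hC.1, u.isBall.diam_pos_of_ssubset hC.1 huC⟩⟩
    exact (ih w ⟨⟨hC.1, huC⟩, hC.2.1⟩ huC).trans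
      (SimpleGraph.Adj.reachable (G := ballGraph X) (.inl hC))

end BallVertex

namespace BallVertex

instance [Nontrivial X] : Nonempty (BallVertex X) := by
  obtain ⟨x, y, hxy⟩ := exists_pair_ne X
  have hy : y ∈ closedBall x (dist x y) := mem_closedBall'.mpr le_rfl
  have hpos : 0 < diam (closedBall x (dist x y)) :=
    (dist_pos.mpr hxy).trans_le (dist_le_diam_of_mem isBounded_closedBall
      (mem_closedBall_self dist_nonneg) hy)
  exact ⟨⟨_, .inl ⟨⟨x, _, dist_nonneg, rfl⟩, hpos⟩⟩⟩

variable [IsUltrametricDist X]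

lemma reachable_of_subset (hshrink : StrictChainsShrink X) (hcover : MaxSubballsCover X)
    {u v : BallVertex X} (huv : u.1 ⊆ v.1) : (ballGraph X).Reachable u v := by
  obtain h | h := huv.eq_or_ssubset
  · exact Subtype.ext h ▸ .rfl
  · exact reachable_of_ssubset hshrink hcover h

lemma isMaxSubball_of_adj_of_diam_lt {u v : BallVertex X} (hadj : (ballGraph X).Adj u v)
    (hlt : diam u.1 < diam v.1) : IsMaxSubball u.1 v.1 :=
  hadj.resolve_right fun h => (v.isBall.diam_lt_diam_of_ssubset u.isBall h.2.1).not_gt hlt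

end BallVertex

open BallVertex

lemma ballGraph_preconnected [IsUltrametricDist X] (hshrink : StrictChainsShrink X)
    (hcover : MaxSubballsCover X) : (ballGraph X).Preconnected := by
  intro u v
  obtain ⟨D, hD, huvD⟩ := IsBall.exists_superset (u.isBall.isBounded.union v.isBall.isBounded)
    (u.isBall.nonempty.mono Set.subset_union_left)
  obtain ⟨huD, hvD⟩ := Set.union_subset_iff.mp huvD
  obtain rfl | huD := huD.eq_or_ssubset
  · exact (reachable_of_subset hshrink hcover hvD).symm
  obtain rfl | hvD := hvD.eq_or_ssubset
  · exact reachable_of_subset hshrink hcover huD.1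
  let w : BallVertex X := ⟨D, .inl ⟨hD, u.isBall.diam_pos_of_ssubset hD huD⟩⟩
  exact (reachable_of_ssubset (v := w) hshrink hcover huD).trans
    (reachable_of_ssubset hshrink hcover hvD).symm

lemma ballGraph_isAcyclic [IsUltrametricDist X] : (ballGraph X).IsAcyclic := by
  refine SimpleGraph.isAcyclic_of_unique_larger_neighbor (fun u => diam u.1) ?_ ?_
  · rintro u v (h | h)
    · exact (u.isBall.diam_lt_diam_of_ssubset v.isBall h.2.1).ne
    · exact (v.isBall.diam_lt_diam_of_ssubset u.isBall h.2.1).ne'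
  · intro u v w huv huw hv hw
    exact Subtype.ext <| (isMaxSubball_of_adj_of_diam_lt huv hv).unique
      (isMaxSubball_of_adj_of_diam_lt huw hw) v.isBall w.isBall

end

theorem stmt_4_general {X : Type*} [MetricSpace X] [Nontrivial X]
    (hultra : ∀ x y z : X, dist x y ≤ max (dist x z) (dist z y))
    (h2 : ∀ D : ℕ → Set X, (∀ k, IsBall (D k)) → (∀ k, D (k + 1) ⊂ D k) →
      Filter.Tendsto (fun k => Metric.diam (D k)) Filter.atTop (nhds 0))
    (h3 : ∀ B : Set X, IsBall B → 0 < Metric.diam B →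
      ∃ F : Finset (Set X), (∀ C ∈ F, IsMaxSubball C B) ∧ B = ⋃ C ∈ F, C) :
    (ballGraph X).IsTree ∧
    ∀ B : Set X, IsBall B → 0 < Metric.diam B →
      ∃ C₁ C₂ : Set X, C₁ ≠ C₂ ∧ IsMaxSubball C₁ B ∧ IsMaxSubball C₂ B := by
  have : IsUltrametricDist X := ⟨fun x y z => hultra x z y⟩
  have hcover : MaxSubballsCover X := fun B hB hpos z hz => by
    obtain ⟨F, hF, rfl⟩ := h3 B hB hpos
    obtain ⟨C, hCF, hzC⟩ := Set.mem_iUnion₂.mp hz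
    exact ⟨C, hF C hCF, hzC⟩
  exact ⟨⟨⟨ballGraph_preconnected h2 hcover⟩, ballGraph_isAcyclic⟩,
    fun B hB hpos => exists_ne_isMaxSubball hcover hB hpos⟩

/-- For a complete ultrametric space with at least two points, satisfying the
countability, decreasing-diameter and finite-branching conditions, the graph of
balls `T(X)` is a tree, and every ball of nonzero diameter has at least two
maximal proper subballs. -/
theorem stmt_4 {X : Type*} [MetricSpace X] [CompleteSpace X] [Nontrivial X]
    (hultra : ∀ x y z : X, dist x y ≤ max (dist x z) (dist z y))
    (h1 : {B : Set X | IsBall B ∧ 0 < Metric.diam B}.Countable)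
    (h2 : ∀ D : ℕ → Set X, (∀ k, IsBall (D k)) → (∀ k, D (k + 1) ⊂ D k) →
      Filter.Tendsto (fun k => Metric.diam (D k)) Filter.atTop (nhds 0))
    (h3 : ∀ B : Set X, IsBall B → 0 < Metric.diam B →
      ∃ F : Finset (Set X), (∀ C ∈ F, IsMaxSubball C B) ∧ B = ⋃ C ∈ F, C) :
    (ballGraph X).IsTree ∧
    ∀ B : Set X, IsBall B → 0 < Metric.diam B →
      ∃ C₁ C₂ : Set X, C₁ ≠ C₂ ∧ IsMaxSubball C₁ B ∧ IsMaxSubball C₂ B :=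
  stmt_4_general hultra h2 h3
end

section
/- Let X be a complete ultrametric space satisfying: (1) the set of balls of nonzero diameter in X is countable; (2) for every sequence of balls D_k with D_{k+1} ⊊ D_k for all k, the diameters of D_k tend to zero; (3) every ball of nonzero diameter is the union of finitely many of its maximal proper subballs. Let ν be a finite Borel measure on X. Then the closed linear span in L²(X,ν) of the constant functions together with the union of the subspaces V⁰_B, where B ranges over all balls of nonzero diameter, is the whole space L²(X,ν). -/
/-!
Let `f ∈ L²(ν)` be orthogonal to the constants and to every `V⁰_B`. Testing `f` against
`ν(C') 𝟙_C - ν(C) 𝟙_{C'}` shows that it has the same average on any two maximal subballs of a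
ball, hence on a ball and each of its maximal subballs. A chain of maximal subballs from a ball `D`
down to a subball `B` either reaches `B` or shrinks to the point `B`, so `f` has the same average
on `B` and `D`; exhausting `X` by balls, this average is the one over `X`, which is `0`. Thus
`∫_B f = 0` for every ball `B`, and balls form a π-system generating the Borel σ-algebra; hence
`f = 0`.
-/

open MeasureTheory

/-- `V⁰_B`: elements of `L²(X,ν)` that are a.e. equal to a finite linear
combination of indicator functions of maximal proper subballs of `B` and have
zero mean. -/
def V0 {X : Type*} [MetricSpace X] [MeasurableSpace X] (ν : Measure X) (B : Set X) :
    Set (MeasureTheory.Lp ℂ 2 ν) :=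
  {f | (∃ (F : Finset (Set X)) (c : Set X → ℂ),
          (∀ C ∈ F, IsMaxSubball C B) ∧
          ∀ᵐ x ∂ν, f x = ∑ C ∈ F, c C * Set.indicator C (fun _ => (1 : ℂ)) x) ∧
       ∫ x, f x ∂ν = 0}

/-- The a.e. constant elements of `L²(X,ν)`. -/
def ConstFuns {X : Type*} [MeasurableSpace X] (ν : Measure X) :
    Set (MeasureTheory.Lp ℂ 2 ν) :=
  {f | ∃ c : ℂ, ∀ᵐ x ∂ν, f x = c}

open Filter Metric Set
open scoped Topology InnerProductSpace

def BallChainsShrink (X : Type*) [MetricSpace X] : Prop :=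
  ∀ D : ℕ → Set X, (∀ k, IsBall (D k)) → (∀ k, D (k + 1) ⊂ D k) →
    Tendsto (fun k => diam (D k)) atTop (𝓝 0)

def FinitelyBranching (X : Type*) [MetricSpace X] : Prop :=
  ∀ B : Set X, IsBall B → 0 < diam B →
    ∃ F : Finset (Set X), (∀ C ∈ F, IsMaxSubball C B) ∧ B = ⋃ C ∈ F, C

section Metric

variable {X : Type*} [MetricSpace X] {B C D : Set X}

theorem IsBall.nonempty_s9 (hB : IsBall B) : B.Nonempty := by
  obtain ⟨z, r, hr, rfl⟩ := hB
  exact nonempty_closedBall.mpr hr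

theorem IsBall.isBounded_s9 (hB : IsBall B) : Bornology.IsBounded B := by
  obtain ⟨z, r, -, rfl⟩ := hB
  exact isBounded_closedBall

theorem IsBall.measurableSet [MeasurableSpace X] [OpensMeasurableSpace X] (hB : IsBall B) :
    MeasurableSet B := by
  obtain ⟨z, r, -, rfl⟩ := hB
  exact measurableSet_closedBall

theorem isBall_closedBall (z : X) {r : ℝ} (hr : 0 ≤ r) : IsBall (closedBall z r) :=
  ⟨z, r, hr, rfl⟩

theorem isBall_singleton (x : X) : IsBall ({x} : Set X) :=
  ⟨x, 0, le_rfl, closedBall_zero.symm⟩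

theorem diam_pos_of_nonempty_ssubset (hB : B.Nonempty) (hD : Bornology.IsBounded D)
    (hBD : B ⊂ D) : 0 < diam D := by
  obtain ⟨x, hx⟩ := hB
  obtain ⟨y, hyD, hyB⟩ := exists_of_ssubset hBD
  exact diam_pos ⟨x, hBD.subset hx, y, hyD, fun h => hyB (h ▸ hx)⟩ hD

theorem IsMaxSubball.diam_pos (hC : IsMaxSubball C B) (hB : IsBall B) : 0 < diam B :=
  diam_pos_of_nonempty_ssubset hC.1.nonempty_s9 hB.isBounded_s9 hC.2.1

theorem iInter_eq_of_tendsto_diam_zero {s : ℕ → Set X} (hB : B.Nonempty) (hBs : ∀ n, B ⊆ s n)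
    (hs : ∀ n, Bornology.IsBounded (s n)) (hdiam : Tendsto (fun n => diam (s n)) atTop (𝓝 0)) :
    ⋂ n, s n = B := by
  refine (subset_iInter hBs).antisymm' fun y hy => ?_
  obtain ⟨x, hx⟩ := hB
  have hyx : dist y x ≤ 0 := ge_of_tendsto' hdiam fun n =>
    dist_le_diam_of_mem (hs n) (mem_iInter.mp hy n) (hBs n hx)
  rwa [dist_le_zero.mp hyx]

/-- A strictly decreasing sequence of balls containing `x` would eventually lie in the open set
`{x}`, so among the balls strictly containing `{x}` there is a minimal one. -/
theorem exists_isMaxSubball_singleton (h2 : BallChainsShrink X) {x : X} (hx : IsOpen {x})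
    (hD : IsBall D) (hxD : {x} ⊂ D) : ∃ E, IsBall E ∧ 0 < diam E ∧ IsMaxSubball {x} E := by
  set S := {E : Set X | IsBall E ∧ {x} ⊂ E}
  have hwf : S.WellFoundedOn (· < ·) := by
    refine Set.wellFoundedOn_iff_no_descending_seq.mpr fun s hs => ?_
    obtain ⟨ε, hε, hεx⟩ := isOpen_singleton_iff.mp hx
    obtain ⟨n, hn⟩ := ((h2 s (fun n => (hs n).1) fun n => s.map_rel_iff.mpr n.lt_succ_self)
      |>.eventually_lt_const hε).exists
    refine (hs n).2.not_subset fun y hy => mem_singleton_iff.mpr (hεx y ?_)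
    exact (dist_le_diam_of_mem (hs n).1.isBounded_s9 hy ((hs n).2.subset rfl)).trans_lt hn
  obtain ⟨E, hmin⟩ := hwf.exists_minimal ⟨D, hD, hxD⟩
  obtain ⟨hE, hxE⟩ := hmin.prop
  exact ⟨E, hE, diam_pos_of_nonempty_ssubset (singleton_nonempty x) hE.isBounded_s9 hxE,
    isBall_singleton x, hxE, fun B'' hB'' h => hmin.not_lt ⟨hB'', h.1⟩ h.2⟩

end Metric

section Ultrametric

variable {X : Type*} [MetricSpace X] [IsUltrametricDist X] {B C C' D : Set X}

theorem IsBall.subset_or_subset_s9 (hB : IsBall B) (hD : IsBall D) (h : (B ∩ D).Nonempty) :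
    B ⊆ D ∨ D ⊆ B := by
  obtain ⟨z, r, -, rfl⟩ := hB
  obtain ⟨w, s, -, rfl⟩ := hD
  rcases IsUltrametricDist.closedBall_subset_trichotomy z w r s with h' | h' | h'
  exacts [Or.inl h', Or.inr h', absurd h (not_nonempty_iff_eq_empty.mpr h'.inter_eq)]

theorem isPiSystem_setOf_isBall : IsPiSystem {B : Set X | IsBall B} := fun B hB D hD h => by
  rcases hB.subset_or_subset_s9 hD h with h' | h'
  · rwa [inter_eq_self_of_subset_left h']
  · rwa [inter_eq_self_of_subset_right h']

theorem IsMaxSubball.eq_of_nonempty_inter (hC : IsMaxSubball C B) (hC' : IsMaxSubball C' B)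
    (h : (C ∩ C').Nonempty) : C = C' := by
  rcases hC.1.subset_or_subset_s9 hC'.1 h with h' | h'
  · exact h'.eq_or_ssubset.resolve_right fun hs => hC.2.2 C' hC'.1 ⟨hs, hC'.2.1⟩
  · exact (h'.eq_or_ssubset.resolve_right fun hs => hC'.2.2 C hC.1 ⟨hs, hC.2.1⟩).symm

theorem IsMaxSubball.disjoint (hC : IsMaxSubball C B) (hC' : IsMaxSubball C' B) (hne : C ≠ C') :
    Disjoint C C' :=
  disjoint_iff_inter_eq_empty.mpr <|
    not_nonempty_iff_eq_empty.mp (mt (hC.eq_of_nonempty_inter hC') hne)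

theorem FinitelyBranching.finite_setOf_isMaxSubball (h3 : FinitelyBranching X) (hB : IsBall B)
    (hd : 0 < diam B) : {C | IsMaxSubball C B}.Finite := by
  obtain ⟨F, hF, hcov⟩ := h3 B hB hd
  refine F.finite_toSet.subset fun C hC => ?_
  obtain ⟨x, hx⟩ := hC.1.nonempty_s9
  obtain ⟨C', hC'F, hxC'⟩ := mem_iUnion₂.mp (hcov ▸ hC.2.1.subset hx)
  rwa [hC.eq_of_nonempty_inter (hF C' hC'F) ⟨x, hx, hxC'⟩]

theorem FinitelyBranching.exists_isMaxSubball_superset (h3 : FinitelyBranching X)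
    (hB : IsBall B) (hD : IsBall D) (hBD : B ⊂ D) : ∃ C, IsMaxSubball C D ∧ B ⊆ C := by
  obtain ⟨F, hF, hcov⟩ := h3 D hD (diam_pos_of_nonempty_ssubset hB.nonempty_s9 hD.isBounded_s9 hBD)
  obtain ⟨x, hx⟩ := hB.nonempty_s9
  obtain ⟨C, hCF, hxC⟩ := mem_iUnion₂.mp (hcov ▸ hBD.subset hx)
  have hC := hF C hCF
  rcases hB.subset_or_subset_s9 hC.1 ⟨x, hx, hxC⟩ with hBC | hCB
  · exact ⟨C, hC, hBC⟩
  · rcases hCB.eq_or_ssubset with rfl | hCB'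
    · exact ⟨C, hC, subset_rfl⟩
    · exact absurd ⟨hCB', hBD⟩ (hC.2.2 B hB)

theorem FinitelyBranching.exists_isMaxSubball_chain (h3 : FinitelyBranching X) (hB : IsBall B)
    (hD : IsBall D) (hBD : B ⊆ D) :
    ∃ s : ℕ → Set X, s 0 = D ∧ ∀ n, IsBall (s n) ∧ B ⊆ s n ∧ s (n + 1) ⊆ s n ∧
      (B ⊂ s n → IsMaxSubball (s (n + 1)) (s n)) := by
  have hstep : ∀ E : {E : Set X // IsBall E ∧ B ⊆ E}, ∃ E' : {E : Set X // IsBall E ∧ B ⊆ E},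
      E'.1 ⊆ E.1 ∧ (B ⊂ E.1 → IsMaxSubball E'.1 E.1) := by
    rintro ⟨E, hE, hBE⟩
    rcases hBE.eq_or_ssubset with rfl | hBE'
    · exact ⟨⟨B, hE, subset_rfl⟩, subset_rfl, fun h => absurd h (ssubset_irrefl B)⟩
    · obtain ⟨C, hC, hBC⟩ := h3.exists_isMaxSubball_superset hB hE hBE'
      exact ⟨⟨C, hC.1, hBC⟩, hC.2.1.subset, fun _ => hC⟩
  choose next hnext using hstep
  refine ⟨fun n => (next^[n] ⟨D, hD, hBD⟩).1, rfl, fun n => ?_⟩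
  simp only [Function.iterate_succ_apply']
  exact ⟨(next^[n] _).2.1, (next^[n] _).2.2, hnext _⟩

theorem countable_setOf_isOpen_singleton (h1 : {B : Set X | IsBall B ∧ 0 < diam B}.Countable)
    (h2 : BallChainsShrink X) (h3 : FinitelyBranching X) : {x : X | IsOpen {x}}.Countable := by
  rcases subsingleton_or_nontrivial X with hX | hX
  · exact subsingleton_of_subsingleton.countable
  have hmax : (⋃ E ∈ {B : Set X | IsBall B ∧ 0 < diam B}, {C | IsMaxSubball C E}).Countable :=
    h1.biUnion fun E hE => (h3.finite_setOf_isMaxSubball hE.1 hE.2).countable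
  refine (hmax.preimage singleton_injective).mono fun x hx => ?_
  obtain ⟨y, hyx⟩ := exists_ne x
  have hxD : {x} ⊂ closedBall x (dist y x) :=
    (ssubset_iff_of_subset (singleton_subset_iff.mpr (mem_closedBall_self dist_nonneg))).mpr
      ⟨y, mem_closedBall.mpr le_rfl, hyx⟩
  obtain ⟨E, hE, hd, hxE⟩ :=
    exists_isMaxSubball_singleton h2 hx (isBall_closedBall x dist_nonneg) hxD
  exact mem_biUnion ⟨hE, hd⟩ hxE

/-- Every open set is a countable union of balls: those of positive diameter it contains,
and its isolated points. -/
theorem borel_eq_generateFrom_isBall (h1 : {B : Set X | IsBall B ∧ 0 < diam B}.Countable)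
    (h2 : BallChainsShrink X) (h3 : FinitelyBranching X) :
    borel X = MeasurableSpace.generateFrom {B | IsBall B} := by
  let := borel X
  have : BorelSpace X := ⟨rfl⟩
  refine le_antisymm (MeasurableSpace.generateFrom_le fun U hU => ?_)
    (MeasurableSpace.generateFrom_le fun B hB => hB.measurableSet)
  set S := {B : Set X | IsBall B ∧ 0 < diam B} ∪ (fun x => {x}) '' {x | IsOpen {x}}
  have hS : ∀ E ∈ S, IsBall E := by
    rintro E (hE | ⟨x, -, rfl⟩)
    exacts [hE.1, isBall_singleton x]
  have hU : U = ⋃₀ {E ∈ S | E ⊆ U} := by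
    refine (sUnion_subset fun E hE => hE.2).antisymm' fun x hxU => ?_
    by_cases hx : IsOpen {x}
    · exact ⟨{x}, ⟨Or.inr ⟨x, hx, rfl⟩, singleton_subset_iff.mpr hxU⟩, rfl⟩
    obtain ⟨ε, hε, hεU⟩ := nhds_basis_closedBall.mem_iff.mp (hU.mem_nhds hxU)
    have hxε : {x} ⊂ closedBall x ε := by
      refine (ssubset_iff_of_subset (singleton_subset_iff.mpr (mem_closedBall_self hε.le))).mpr ?_
      by_contra! h
      exact hx (isOpen_singleton_iff.mpr ⟨ε, hε, fun y hy => h y (mem_closedBall.mpr hy.le)⟩)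
    have hd := diam_pos_of_nonempty_ssubset (singleton_nonempty x) isBounded_closedBall hxε
    exact ⟨_, ⟨Or.inl ⟨isBall_closedBall x hε.le, hd⟩, hεU⟩, mem_closedBall_self hε.le⟩
  rw [hU]
  have hScount : S.Countable := h1.union ((countable_setOf_isOpen_singleton h1 h2 h3).image _)
  exact MeasurableSet.sUnion (hScount.mono (sep_subset _ _)) fun E hE =>
    MeasurableSpace.measurableSet_generateFrom (hS E hE.1)

end Ultrametric

section SameAverage

variable {X : Type*} [MeasurableSpace X] {ν : Measure X} {f : X → ℂ}
  {A B D E : Set X}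

/-- `f` has the same average over `A` and over `B`; the averages are cross-multiplied, so that
null sets need no special treatment. -/
def SameAverage (ν : Measure X) (f : X → ℂ) (A B : Set X) : Prop :=
  (ν.real B : ℂ) * ∫ x in A, f x ∂ν = (ν.real A : ℂ) * ∫ x in B, f x ∂ν

theorem SameAverage.refl (ν : Measure X) (f : X → ℂ) (A : Set X) : SameAverage ν f A A := rfl

theorem SameAverage.symm (h : SameAverage ν f A B) : SameAverage ν f B A := Eq.symm h

theorem SameAverage.trans [IsFiniteMeasure ν] (hAE : A ⊆ E) (hA : SameAverage ν f A E)
    (hE : SameAverage ν f E D) :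
    SameAverage ν f A D := by
  by_cases hνE : ν E = 0
  · have hνA : ν A = 0 := measure_mono_null hAE hνE
    simp [SameAverage, setIntegral_measure_zero _ hνA, Measure.real, hνA]
  · have hE' : (ν.real E : ℂ) ≠ 0 :=
      Complex.ofReal_ne_zero.mpr ((measureReal_ne_zero_iff (measure_ne_top ν E)).mpr hνE)
    refine mul_left_cancel₀ hE' ?_
    unfold SameAverage at *
    linear_combination (ν.real D : ℂ) * hA + (ν.real A : ℂ) * hE

theorem SameAverage.of_tendsto {s : ℕ → Set X}
    (hν : Tendsto (fun n => ν.real (s n)) atTop (𝓝 (ν.real A)))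
    (hint : Tendsto (fun n => ∫ x in s n, f x ∂ν) atTop (𝓝 (∫ x in A, f x ∂ν)))
    (h : ∀ n, SameAverage ν f (s n) D) : SameAverage ν f A D :=
  tendsto_nhds_unique (hint.const_mul _)
    ((((Complex.continuous_ofReal.tendsto _).comp hν).mul_const _).congr fun n => (h n).symm)

theorem SameAverage.iInter [IsFiniteMeasure ν] {s : ℕ → Set X} (hs : ∀ n, MeasurableSet (s n))
    (hanti : Antitone s) (hf : Integrable f ν) (h : ∀ n, SameAverage ν f (s n) D) :
    SameAverage ν f (⋂ n, s n) D :=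
  .of_tendsto ((ENNReal.tendsto_toReal (measure_ne_top ν _)).comp
      (tendsto_measure_iInter_atTop (fun n => (hs n).nullMeasurableSet) hanti
        ⟨0, measure_ne_top ν _⟩))
    (tendsto_setIntegral_of_antitone hs hanti ⟨0, hf.integrableOn⟩) h

theorem SameAverage.iUnion [IsFiniteMeasure ν] {s : ℕ → Set X} (hs : ∀ n, MeasurableSet (s n))
    (hmono : Monotone s) (hf : Integrable f ν) (h : ∀ n, SameAverage ν f (s n) D) :
    SameAverage ν f (⋃ n, s n) D :=
  .of_tendsto ((ENNReal.tendsto_toReal (measure_ne_top ν _)).comp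
      (tendsto_measure_iUnion_atTop hmono))
    (tendsto_setIntegral_of_monotone hs hmono hf.integrableOn) h

end SameAverage

section Balls

variable {X : Type*} [MetricSpace X] [MeasurableSpace X] [OpensMeasurableSpace X] {ν : Measure X}
  {f : X → ℂ} {B D : Set X}

theorem FinitelyBranching.sameAverage_isMaxSubball [IsUltrametricDist X] [IsFiniteMeasure ν]
    (h3 : FinitelyBranching X) (hf : Integrable f ν)
    (hpair : ∀ C C', IsMaxSubball C B → IsMaxSubball C' B → SameAverage ν f C C')
    (hB : IsBall B) {C : Set X} (hC : IsMaxSubball C B) : SameAverage ν f C B := by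
  obtain ⟨F, hF, hcov⟩ := h3 B hB (hC.diam_pos hB)
  have hdisj : (F : Set (Set X)).PairwiseDisjoint id :=
    fun C₁ h₁ C₂ h₂ hne => (hF C₁ h₁).disjoint (hF C₂ h₂) hne
  have hmeas : ∀ C' ∈ F, MeasurableSet C' := fun C' h => (hF C' h).1.measurableSet
  have hνB : ν.real B = ∑ C' ∈ F, ν.real C' := by
    rw [hcov]
    exact measureReal_biUnion_finset hdisj hmeas
  have hintB : ∫ x in B, f x ∂ν = ∑ C' ∈ F, ∫ x in C', f x ∂ν := by
    rw [hcov]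
    exact integral_biUnion_finset F hmeas hdisj fun _ _ => hf.integrableOn
  rw [SameAverage, hνB, hintB]
  push_cast
  rw [Finset.sum_mul, Finset.mul_sum]
  exact Finset.sum_congr rfl fun C' hC' => hpair C C' hC (hF C' hC')

theorem FinitelyBranching.sameAverage_of_subset [IsUltrametricDist X] [IsFiniteMeasure ν]
    (h2 : BallChainsShrink X) (h3 : FinitelyBranching X) (hf : Integrable f ν)
    (hmax : ∀ {E C}, IsBall E → IsMaxSubball C E → SameAverage ν f C E)
    (hB : IsBall B) (hD : IsBall D) (hBD : B ⊆ D) : SameAverage ν f B D := by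
  obtain ⟨s, rfl, hs⟩ := h3.exists_isMaxSubball_chain hB hD hBD
  have hsD : ∀ n, SameAverage ν f (s n) (s 0) := by
    intro n
    induction n with
    | zero => exact .refl ν f _
    | succ n ih =>
      rcases (hs n).2.1.eq_or_ssubset with hBs | hBs
      · rwa [(hs n).2.2.1.antisymm (hBs ▸ (hs (n + 1)).2.1)]
      · exact (hmax (hs n).1 ((hs n).2.2.2 hBs)).trans (hs n).2.2.1 ih
  by_cases hstop : ∃ n, s n = B
  · obtain ⟨n, rfl⟩ := hstop
    exact hsD n
  push Not at hstop
  -- The chain never reaches `B`, so it shrinks to `B`.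
  have hdiam := h2 s (fun n => (hs n).1) fun n =>
    ((hs n).2.2.2 ((hs n).2.1.ssubset_of_ne (hstop n).symm)).2.1
  rw [← iInter_eq_of_tendsto_diam_zero hB.nonempty_s9 (fun n => (hs n).2.1)
    (fun n => (hs n).1.isBounded_s9) hdiam]
  exact .iInter (fun n => (hs n).1.measurableSet) (antitone_nat_of_succ_le fun n => (hs n).2.2.1)
    hf hsD

theorem setIntegral_isBall_eq_zero [IsFiniteMeasure ν] (hf : Integrable f ν)
    (hint : ∫ x, f x ∂ν = 0)
    (hsub : ∀ {B D}, IsBall B → IsBall D → B ⊆ D → SameAverage ν f B D) (hB : IsBall B) :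
    ∫ x in B, f x ∂ν = 0 := by
  obtain ⟨z, r, hr, rfl⟩ := hB
  have hmono : Monotone fun n : ℕ => closedBall z (r + n) := fun m n hmn =>
    closedBall_subset_closedBall (by gcongr)
  have huniv : ⋃ n : ℕ, closedBall z (r + n) = univ := eq_univ_of_forall fun y =>
    mem_iUnion.mpr ((exists_nat_ge (dist y z)).imp fun n hn => mem_closedBall.mpr (by linarith))
  have h := SameAverage.iUnion (fun _ => measurableSet_closedBall) hmono hf fun n =>
    (hsub (isBall_closedBall z hr) (isBall_closedBall z (by positivity))
      (closedBall_subset_closedBall (by simp))).symm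
  rw [huniv, SameAverage, setIntegral_univ, hint, mul_zero, eq_comm, mul_eq_zero] at h
  rcases h with h | h
  · rw [Complex.ofReal_eq_zero, measureReal_eq_zero_iff, Measure.measure_univ_eq_zero] at h
    simp [h]
  · exact h

end Balls

theorem ae_eq_zero_of_setIntegral_isBall_eq_zero {X : Type*} [MetricSpace X]
    [IsUltrametricDist X] [MeasurableSpace X] [BorelSpace X] {ν : Measure X} {f : X → ℂ}
    (h1 : {B : Set X | IsBall B ∧ 0 < diam B}.Countable) (h2 : BallChainsShrink X)
    (h3 : FinitelyBranching X) (hf : Integrable f ν) (hint : ∫ x, f x ∂ν = 0)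
    (hball : ∀ B, IsBall B → ∫ x in B, f x ∂ν = 0) : f =ᵐ[ν] 0 := by
  suffices h : ∀ A, MeasurableSet A → ∫ x in A, f x ∂ν = 0 from
    hf.ae_eq_zero_of_forall_setIntegral_eq_zero fun A hA _ => h A hA
  intro A hA
  induction A, hA using MeasurableSpace.induction_on_inter
    (BorelSpace.measurable_eq.trans (borel_eq_generateFrom_isBall h1 h2 h3))
    isPiSystem_setOf_isBall with
  | empty => simp
  | basic B hB => exact hball B hB
  | compl A hA ih => simpa [ih, hint] using integral_add_compl hA hf
  | iUnion g hdisj hg ih => simp [integral_iUnion hg hdisj hf.integrableOn, ih]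

section L2

variable {X : Type*} [MeasurableSpace X] {ν : Measure X} [IsFiniteMeasure ν] {f : Lp ℂ 2 ν}

theorem integral_eq_zero_of_inner_constFuns (hf : ∀ g ∈ ConstFuns ν, ⟪g, f⟫_ℂ = 0) :
    ∫ x, f x ∂ν = 0 := by
  have h1 : indicatorConstLp 2 MeasurableSet.univ (measure_ne_top ν univ) (1 : ℂ) ∈ ConstFuns ν :=
    ⟨1, (indicatorConstLp_coeFn (p := 2) (hs := .univ) (hμs := measure_ne_top ν univ)
      (c := (1 : ℂ))).mono fun x hx => by rw [hx]; simp⟩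
  have h := hf _ h1
  rwa [L2.inner_indicatorConstLp_one, setIntegral_univ] at h

theorem sameAverage_of_inner_V0 [MetricSpace X] [OpensMeasurableSpace X] {B C C' : Set X}
    (hf : ∀ g ∈ V0 ν B, ⟪g, f⟫_ℂ = 0) (hC : IsMaxSubball C B) (hC' : IsMaxSubball C' B) :
    SameAverage ν f C C' := by
  by_cases hCC' : C = C'
  · subst hCC'
    exact .refl ν f C
  have hind : ∀ {A : Set X}, IsBall A → ∃ u : Lp ℂ 2 ν,
      ⇑u =ᵐ[ν] A.indicator (fun _ => 1) ∧ ⟪u, f⟫_ℂ = ∫ x in A, f x ∂ν := fun hA =>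
    ⟨_, indicatorConstLp_coeFn,
      L2.inner_indicatorConstLp_one hA.measurableSet (measure_ne_top ν _) f⟩
  obtain ⟨u, hu, hinner⟩ := hind hC.1
  obtain ⟨u', hu', hinner'⟩ := hind hC'.1
  set a : ℂ := (ν.real C' : ℂ)
  set b : ℂ := (ν.real C : ℂ)
  have hrep : ⇑(a • u - b • u') =ᵐ[ν]
      fun x => a * C.indicator (fun _ => 1) x + -b * C'.indicator (fun _ => 1) x := by
    filter_upwards [Lp.coeFn_sub (a • u) (b • u'), Lp.coeFn_smul a u, Lp.coeFn_smul b u', hu, hu']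
      with x h1 h2 h3 h4 h5
    rw [h1, Pi.sub_apply, h2, h3, Pi.smul_apply, Pi.smul_apply, h4, h5, smul_eq_mul, smul_eq_mul]
    ring
  have hg : a • u - b • u' ∈ V0 ν B := by
    have hi : ∀ {A : Set X}, IsBall A → Integrable (A.indicator fun _ => (1 : ℂ)) ν :=
      fun hA => (integrable_const 1).indicator hA.measurableSet
    refine ⟨⟨{C, C'}, fun A => if A = C then a else -b, ?_, hrep.mono fun x hx => ?_⟩, ?_⟩
    · simp [hC, hC']
    · rw [hx, Finset.sum_pair hCC']
      simp [Ne.symm hCC']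
    · rw [integral_congr_ae hrep, integral_add ((hi hC.1).const_mul a) ((hi hC'.1).const_mul _),
        integral_const_mul, integral_const_mul, integral_indicator_const _ hC.1.measurableSet,
        integral_indicator_const _ hC'.1.measurableSet]
      simp only [a, b, Complex.real_smul, mul_one]
      ring
  have h := hf _ hg
  rw [inner_sub_left, inner_smul_left, inner_smul_left, hinner, hinner'] at h
  simp only [a, b, Complex.conj_ofReal] at h
  unfold SameAverage
  linear_combination h

end L2

theorem stmt_9_general {X : Type*} [MetricSpace X]
    [MeasurableSpace X] [BorelSpace X]
    (hultra : ∀ x y z : X, dist x y ≤ max (dist x z) (dist z y))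
    (h1 : {B : Set X | IsBall B ∧ 0 < Metric.diam B}.Countable)
    (h2 : ∀ D : ℕ → Set X, (∀ k, IsBall (D k)) → (∀ k, D (k + 1) ⊂ D k) →
      Filter.Tendsto (fun k => Metric.diam (D k)) Filter.atTop (nhds 0))
    (h3 : ∀ B : Set X, IsBall B → 0 < Metric.diam B →
      ∃ F : Finset (Set X), (∀ C ∈ F, IsMaxSubball C B) ∧ B = ⋃ C ∈ F, C)
    (ν : Measure X) [IsFiniteMeasure ν] :
    (Submodule.span ℂ
        (ConstFuns ν ∪ ⋃ B ∈ {B : Set X | IsBall B ∧ 0 < Metric.diam B}, V0 ν B)).topologicalClosure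
      = ⊤ := by
  have : IsUltrametricDist X := ⟨fun x y z => hultra x z y⟩
  have h3 : FinitelyBranching X := h3
  rw [Submodule.topologicalClosure_eq_top_iff, Submodule.eq_bot_iff]
  intro f hf
  have horth : ∀ g ∈ ConstFuns ν ∪ ⋃ B ∈ {B : Set X | IsBall B ∧ 0 < diam B}, V0 ν B,
      ⟪g, f⟫_ℂ = 0 := fun g hg => (Submodule.mem_orthogonal _ f).mp hf g (Submodule.subset_span hg)
  have hfi : Integrable f ν := (Lp.memLp f).integrable one_le_two
  have hint := integral_eq_zero_of_inner_constFuns fun g hg => horth g (Or.inl hg)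
  have hmax {E C : Set X} (hE : IsBall E) (hC : IsMaxSubball C E) : SameAverage ν f C E :=
    h3.sameAverage_isMaxSubball hfi (fun C C' hC hC' => sameAverage_of_inner_V0
      (fun g hg => horth g (Or.inr (mem_biUnion ⟨hE, hC.diam_pos hE⟩ hg))) hC hC') hE hC
  have hball := fun B hB => setIntegral_isBall_eq_zero hfi hint
    (fun hB hD hBD => h3.sameAverage_of_subset h2 hfi hmax hB hD hBD) (B := B) hB
  exact Lp.eq_zero_iff_ae_eq_zero.mpr
    (ae_eq_zero_of_setIntegral_isBall_eq_zero h1 h2 h3 hfi hint hball)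

/-- If the ultrametric space `X` (complete, with the countability,
decreasing-diameter and finite-branching conditions) carries a finite Borel
measure `ν`, then the closed linear span of the constants together with the union
of the spaces `V⁰_B` over all balls `B` of nonzero diameter is all of `L²(X,ν)`. -/
theorem stmt_9 {X : Type*} [MetricSpace X] [CompleteSpace X]
    [MeasurableSpace X] [BorelSpace X]
    (hultra : ∀ x y z : X, dist x y ≤ max (dist x z) (dist z y))
    (h1 : {B : Set X | IsBall B ∧ 0 < Metric.diam B}.Countable)
    (h2 : ∀ D : ℕ → Set X, (∀ k, IsBall (D k)) → (∀ k, D (k + 1) ⊂ D k) →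
      Filter.Tendsto (fun k => Metric.diam (D k)) Filter.atTop (nhds 0))
    (h3 : ∀ B : Set X, IsBall B → 0 < Metric.diam B →
      ∃ F : Finset (Set X), (∀ C ∈ F, IsMaxSubball C B) ∧ B = ⋃ C ∈ F, C)
    (ν : Measure X) [IsFiniteMeasure ν] :
    (Submodule.span ℂ
        (ConstFuns ν ∪ ⋃ B ∈ {B : Set X | IsBall B ∧ 0 < Metric.diam B}, V0 ν B)).topologicalClosure
      = ⊤ :=
  stmt_9_general hultra h1 h2 h3 ν
end

section
/- Let X be an ultrametric space with a Borel measure ν, and let B be a ball of nonzero diameter with ν(B) < ∞ such that B is the union of its maximal proper subballs. Let τ be a complex-valued function on the set of subsets of X, and for distinct x, y ∈ X write S(x,y) = closedBall(x, dist(x,y)) (the smallest ball containing x and y). Define the pseudodifferential operator (Tf)(x) = ∫ τ(S(x,y)) · (f(x) − f(y)) dν(y). Let ψ : X → ℂ be a ν-integrable measurable function that vanishes outside B, has ∫ ψ dν = 0, and is constant on every maximal proper subball of B. Fix b ∈ B and assume the function y ↦ τ(closedBall(b, dist(b,y))) is ν-integrable on X \ B. Then for every x ∈ X the integral defining (Tψ)(x)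 converges and (Tψ)(x) = λ · ψ(x), where λ = τ(B)·ν(B) + ∫_{X \ B} τ(closedBall(b, dist(b,y))) dν(y); moreover λ does not depend on the choice of b ∈ B, since closedBall(b, dist(b,y)) = closedBall(b', dist(b',y)) for all b, b' ∈ B and y ∉ B. -/
/-! In an ultrametric space every point of a closed ball is a center of it. Hence for `x` in a
maximal proper subball `C` of `B` and `y ∈ B \ C` the smallest ball containing `x` and `y` is `B`,
while for `y ∉ B` it does not depend on the choice of `x ∈ B`. So on `B` the kernel can be replaced
by the constant `τ(B)` (on `C` the factor `ψ x - ψ y` vanishes), and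
`∫_B (ψ x - ψ y) dν(y) = ν(B) ψ x` since `ψ` has mean zero and is supported in `B`. For `x ∉ B`
the kernel is constant on `B` and `ψ x = 0`, so the same computation gives `0`. -/

open MeasureTheory

open Metric Set

namespace IsUltrametricDist

variable {X : Type*} [MetricSpace X] [IsUltrametricDist X]

lemma dist_lt_of_mem_closedBall_of_notMem {z b y : X} {r : ℝ} (hb : b ∈ closedBall z r)
    (hy : y ∉ closedBall z r) : r < dist b y := by
  rwa [closedBall_eq_of_mem hb, mem_closedBall', not_le] at hy

lemma dist_eq_of_mem_closedBall_of_notMem {z b₁ b₂ y : X} {r : ℝ}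
    (h₁ : b₁ ∈ closedBall z r) (h₂ : b₂ ∈ closedBall z r) (hy : y ∉ closedBall z r) :
    dist b₁ y = dist b₂ y := by
  have h₁₂ : dist b₁ b₂ ≤ r := by
    rwa [closedBall_eq_of_mem h₁, mem_closedBall'] at h₂
  apply le_antisymm
  · exact (dist_triangle_max b₁ b₂ y).trans
      (max_le (h₁₂.trans (dist_lt_of_mem_closedBall_of_notMem h₂ hy).le) le_rfl)
  · exact (dist_triangle_max b₂ b₁ y).trans
      (max_le ((dist_comm b₂ b₁ ▸ h₁₂).trans (dist_lt_of_mem_closedBall_of_notMem h₁ hy).le) le_rfl)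

lemma closedBall_dist_eq_of_mem_closedBall_of_notMem {z b₁ b₂ y : X} {r : ℝ}
    (h₁ : b₁ ∈ closedBall z r) (h₂ : b₂ ∈ closedBall z r) (hy : y ∉ closedBall z r) :
    closedBall b₁ (dist b₁ y) = closedBall b₂ (dist b₂ y) := by
  rw [dist_eq_of_mem_closedBall_of_notMem h₁ h₂ hy]
  have hr := dist_lt_of_mem_closedBall_of_notMem h₂ hy
  rw [closedBall_eq_of_mem h₁, mem_closedBall'] at h₂
  exact closedBall_eq_of_mem (mem_closedBall'.2 (h₂.trans hr.le))

lemma closedBall_dist_eq_of_isMaxSubball {z x y : X} {r : ℝ} {C : Set X}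
    (hC : IsMaxSubball C (closedBall z r)) (hx : x ∈ C) (hy : y ∈ closedBall z r) (hyC : y ∉ C) :
    closedBall x (dist x y) = closedBall z r := by
  obtain ⟨⟨c, s, -, rfl⟩, hCB, hmax⟩ := hC
  have hxB : x ∈ closedBall z r := hCB.subset hx
  have hsub : closedBall x (dist x y) ⊆ closedBall z r := by
    rw [closedBall_eq_of_mem hxB] at hy ⊢
    exact closedBall_subset_closedBall (mem_closedBall'.1 hy)
  have hlt : closedBall c s ⊂ closedBall x (dist x y) := by
    rw [closedBall_eq_of_mem hx, mem_closedBall', not_le] at *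
    refine ⟨closedBall_subset_closedBall hyC.le, fun h => ?_⟩
    exact (mem_closedBall'.1 (h (mem_closedBall'.2 le_rfl))).not_gt hyC
  by_contra hne
  exact hmax _ ⟨x, dist x y, dist_nonneg, rfl⟩ ⟨hlt, hsub.ssubset_of_ne hne⟩

end IsUltrametricDist

section Wavelet

variable {X : Type*} [MeasurableSpace X] {ν : Measure X} {B : Set X} {ψ : X → ℂ}

lemma setIntegral_const_sub_of_integral_eq_zero (hνB : ν B ≠ ⊤) (hψ : Integrable ψ ν)
    (hsupp : ∀ y ∉ B, ψ y = 0) (hmean : ∫ y, ψ y ∂ν = 0) (c : ℂ) :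
    ∫ y in B, (c - ψ y) ∂ν = ν.real B * c := by
  have hc : IntegrableOn (fun _ => c) B ν := integrableOn_const hνB
  rw [integral_sub hc hψ.integrableOn, setIntegral_const,
    setIntegral_eq_integral_of_forall_compl_eq_zero hsupp, hmean, sub_zero, Complex.real_smul]

lemma integrable_and_integral_mul_const_sub (hB : MeasurableSet B) (hνB : ν B ≠ ⊤)
    (hψ : Integrable ψ ν) (hsupp : ∀ y ∉ B, ψ y = 0) (hmean : ∫ y, ψ y ∂ν = 0)
    {K : X → ℂ} {k c : ℂ} (hK : ∀ y ∈ B, K y * (c - ψ y) = k * (c - ψ y))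
    (hKc : IntegrableOn (fun y => K y * c) Bᶜ ν) :
    Integrable (fun y => K y * (c - ψ y)) ν ∧
      ∫ y, K y * (c - ψ y) ∂ν = k * ν.real B * c + ∫ y in Bᶜ, K y * c ∂ν := by
  have hin : EqOn (fun y => K y * (c - ψ y)) (fun y => k * (c - ψ y)) B := hK
  have hout : EqOn (fun y => K y * (c - ψ y)) (fun y => K y * c) Bᶜ := fun y hy => by
    simp only [hsupp y hy, sub_zero]
  have hint : Integrable (fun y => K y * (c - ψ y)) ν := by
    rw [← integrableOn_univ, ← union_compl_self B]
    have hc : IntegrableOn (fun _ => c) B ν := integrableOn_const hνB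
    exact (IntegrableOn.congr_fun ((hc.sub hψ.integrableOn).const_mul k) hin.symm hB).union
      (hKc.congr_fun hout.symm hB.compl)
  refine ⟨hint, ?_⟩
  rw [← integral_add_compl hB hint, setIntegral_congr_fun hB hin,
    setIntegral_congr_fun hB.compl hout, integral_const_mul,
    setIntegral_const_sub_of_integral_eq_zero hνB hψ hsupp hmean, mul_assoc]

end Wavelet

open IsUltrametricDist

theorem stmt_12_general {X : Type*} [MetricSpace X] [MeasurableSpace X] [BorelSpace X]
    (hultra : ∀ x y z : X, dist x y ≤ max (dist x z) (dist z y))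
    (ν : Measure X)
    (B : Set X) (hB : IsBall B) (hνB : ν B < ⊤)
    (hcover : B = ⋃₀ {C : Set X | IsMaxSubball C B})
    (τ : Set X → ℂ)
    (ψ : X → ℂ) (hψ : Integrable ψ ν)
    (hsupp : ∀ x ∉ B, ψ x = 0)
    (hmean : ∫ x, ψ x ∂ν = 0)
    (hconst : ∀ C : Set X, IsMaxSubball C B → ∀ x ∈ C, ∀ y ∈ C, ψ x = ψ y)
    (b : X) (hb : b ∈ B)
    (hτ : IntegrableOn (fun y => τ (Metric.closedBall b (dist b y))) Bᶜ ν) :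
    (∀ b' ∈ B, ∀ b'' ∈ B, ∀ y ∉ B,
        Metric.closedBall b' (dist b' y) = Metric.closedBall b'' (dist b'' y)) ∧
    ∀ x : X,
      Integrable (fun y => τ (Metric.closedBall x (dist x y)) * (ψ x - ψ y)) ν ∧
      ∫ y, τ (Metric.closedBall x (dist x y)) * (ψ x - ψ y) ∂ν
        = (τ B * ((ν B).toReal : ℂ)
            + ∫ y in Bᶜ, τ (Metric.closedBall b (dist b y)) ∂ν) * ψ x := by
  have : IsUltrametricDist X := ⟨fun x y z => hultra x z y⟩
  obtain ⟨z, r, -, rfl⟩ := hB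
  refine ⟨fun _ hb' _ hb'' _ hy => closedBall_dist_eq_of_mem_closedBall_of_notMem hb' hb'' hy,
    fun x => ?_⟩
  by_cases hx : x ∈ closedBall z r
  · obtain ⟨C, hC, hxC⟩ : x ∈ ⋃₀ {C | IsMaxSubball C (closedBall z r)} := hcover ▸ hx
    have hK : ∀ y ∈ closedBall z r, τ (closedBall x (dist x y)) * (ψ x - ψ y)
        = τ (closedBall z r) * (ψ x - ψ y) := by
      intro y hy
      by_cases hyC : y ∈ C
      · rw [hconst C hC x hxC y hyC, sub_self, mul_zero, mul_zero]
      · rw [closedBall_dist_eq_of_isMaxSubball hC hxC hy hyC]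
    have hout : EqOn (fun y => τ (closedBall x (dist x y)) * ψ x)
        (fun y => τ (closedBall b (dist b y)) * ψ x) (closedBall z r)ᶜ := fun y hy => by
      simp only [closedBall_dist_eq_of_mem_closedBall_of_notMem hx hb hy]
    obtain ⟨hint, heq⟩ := integrable_and_integral_mul_const_sub measurableSet_closedBall
      hνB.ne hψ hsupp hmean hK
      (IntegrableOn.congr_fun (hτ.mul_const _) hout.symm measurableSet_closedBall.compl)
    refine ⟨hint, ?_⟩
    rw [heq, setIntegral_congr_fun measurableSet_closedBall.compl hout, integral_mul_const,
      add_mul, measureReal_def]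
  · have hK : ∀ y ∈ closedBall z r, τ (closedBall x (dist x y)) * (ψ x - ψ y)
        = τ (closedBall x (dist x b)) * (ψ x - ψ y) := by
      intro y hy
      rw [dist_comm x y, dist_comm x b, dist_eq_of_mem_closedBall_of_notMem hy hb hx]
    obtain ⟨hint, heq⟩ := integrable_and_integral_mul_const_sub measurableSet_closedBall
      hνB.ne hψ hsupp hmean hK (by simp [hsupp x hx])
    exact ⟨hint, by rw [heq]; simp [hsupp x hx]⟩

/-- Diagonalization of the ultrametric pseudodifferential operator
`Tf(x) = ∫ τ(sup(x,y)) (f(x) − f(y)) dν(y)` on a wavelet `ψ` attached to the ball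
`B`: for every `x` the defining integral converges and `Tψ(x) = λ ψ(x)` with
`λ = τ(B) ν(B) + ∫_{X∖B} τ(sup(B,y)) dν(y)`, the latter integral being independent
of the choice of the point `b ∈ B` used to represent `sup(B,y)`. -/
theorem stmt_12 {X : Type*} [MetricSpace X] [MeasurableSpace X] [BorelSpace X]
    (hultra : ∀ x y z : X, dist x y ≤ max (dist x z) (dist z y))
    (ν : Measure X)
    (B : Set X) (hB : IsBall B) (hd : 0 < Metric.diam B) (hνB : ν B < ⊤)
    (hcover : B = ⋃₀ {C : Set X | IsMaxSubball C B})
    (τ : Set X → ℂ)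
    (ψ : X → ℂ) (hψ : Integrable ψ ν)
    (hsupp : ∀ x ∉ B, ψ x = 0)
    (hmean : ∫ x, ψ x ∂ν = 0)
    (hconst : ∀ C : Set X, IsMaxSubball C B → ∀ x ∈ C, ∀ y ∈ C, ψ x = ψ y)
    (b : X) (hb : b ∈ B)
    (hτ : IntegrableOn (fun y => τ (Metric.closedBall b (dist b y))) Bᶜ ν) :
    (∀ b' ∈ B, ∀ b'' ∈ B, ∀ y ∉ B,
        Metric.closedBall b' (dist b' y) = Metric.closedBall b'' (dist b'' y)) ∧
    ∀ x : X,
      Integrable (fun y => τ (Metric.closedBall x (dist x y)) * (ψ x - ψ y)) ν ∧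
      ∫ y, τ (Metric.closedBall x (dist x y)) * (ψ x - ψ y) ∂ν
        = (τ B * ((ν B).toReal : ℂ)
            + ∫ y in Bᶜ, τ (Metric.closedBall b (dist b y)) ∂ν) * ψ x :=
  stmt_12_general hultra ν B hB hνB hcover τ ψ hψ hsupp hmean hconst b hb hτ
end
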